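/- arXiv:1509.05834 — 2 statements merged into one kernel-verified Lean document; each statement's English description precedes it below -/
import Mathlib

section
/- Let f : D → H be an operator on a real Hilbert space H such that for every α̂ > 0 the range of (I - α̂ f) is all of H. Fix k > 0 and r ∈ H and define B(m) = k(r - m). Then for every α > 0 the range of (I - α(f + B)) is all of H. -/
/-- Range-condition half of Theorem 5 of the paper: if for every `α̂ > 0` the range
of `I - α̂ f` (with domain `D`) is all of `H`, `k > 0`, `r ∈ H`, and `B m = k(r - m)`,
then for every `α > 0` the range of `I - α(f + B)` is all of `H`. -/
theorem stmt7 {H : Type*} [NormedAddCommGroup H] [InnerProductSpace ℝ H]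
    [CompleteSpace H] (D : Set H) (f : H → H) (k : ℝ) (hk : 0 < k) (r : H)
    (hrange : ∀ α : ℝ, 0 < α → ∀ y : H, ∃ m ∈ D, m - α • f m = y) :
    ∀ α : ℝ, 0 < α → ∀ y : H, ∃ m ∈ D, m - α • (f m + k • (r - m)) = y := by
  intro α hα y
  have hden : 0 < 1 + α * k := by positivity
  obtain ⟨m, hmD, hm⟩ := hrange (α / (1 + α * k)) (by positivity)
    ((1 + α * k)⁻¹ • (y + (α * k) • r))
  refine ⟨m, hmD, ?_⟩
  have h := congrArg (fun z => (1 + α * k) • z) hm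
  simp only [smul_sub, smul_smul, smul_add] at h
  rw [mul_div_cancel₀ _ (ne_of_gt hden), mul_inv_cancel₀ (ne_of_gt hden)] at h
  have h' : (1 + α * k) • m - α • f m = y + (α * k) • r := by
    rw [← mul_assoc, mul_inv_cancel₀ (ne_of_gt hden), one_mul] at h; simpa using h
  have : m - α • (f m + k • (r - m)) =
      ((1 + α * k) • m - α • f m) - (α * k) • r := by
    simp only [smul_add, smul_smul, smul_sub, add_smul, one_smul]
    module
  rw [this, h']
  abel
end

section
/- Let z : [0,∞) × [0,L] → ℝ³ be a smooth solution of the linearized controlled Landau–Lifshitz equation ∂z/∂t = ν z_xx + a × z_xx + k(r - z) with Neumann boundary conditions z_x(0,t) = z_x(L,t) = 0, where ν ≥ 0, k > 0, and a, r ∈ ℝ³ constants. Then the function V(t) = ½‖z(·,t) - r‖²_{L²} satisfies V'(t) = -ν‖z_x(·,t)‖²_{L²} - k‖z(·,t) - r‖²_{L²} ≤ -2kV(t), and hence ‖z(·,t) - r‖²_{L²} ≤ e^{-2kt}‖z(·,0) - r‖²_{L²}. -/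
open Matrix Set MeasureTheory

/-!
Differentiating under the integral sign gives `V' = ∫ ⟪z - r, z_t⟫`. Integrating by parts against
the flux `ν z_x + a × z_x`, which vanishes at both ends by the Neumann condition, turns
`∫ ⟪z - r, ν z_xx + a × z_xx⟫` into `-∫ ⟪z_x, ν z_x + a × z_x⟫ = -ν ‖z_x‖²`, because
`z_x ⊥ a × z_x`. Hence `V' ≤ -2kV`, so `e^{2kt} V(t)` is nonincreasing.
-/

theorem HasDerivAt.dotProduct {𝕜 ι : Type*} [NontriviallyNormedField 𝕜] [Fintype ι]
    {f g : 𝕜 → ι → 𝕜} {f' g' : ι → 𝕜} {x : 𝕜}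
    (hf : HasDerivAt f f' x) (hg : HasDerivAt g g' x) :
    HasDerivAt (fun y => f y ⬝ᵥ g y) (f' ⬝ᵥ g x + f x ⬝ᵥ g') x := by
  unfold _root_.dotProduct
  rw [← Finset.sum_add_distrib]
  exact HasDerivAt.fun_sum fun i _ => (hasDerivAt_pi.mp hf i).fun_mul (hasDerivAt_pi.mp hg i)

theorem Continuous.const_crossProduct {X : Type*} [TopologicalSpace X] {g : X → Fin 3 → ℝ}
    (a : Fin 3 → ℝ) (hg : Continuous g) : Continuous fun p => a ⨯₃ g p :=
  (LinearMap.continuous_of_finiteDimensional (crossProduct a)).comp hg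

theorem HasDerivAt.const_crossProduct {g : ℝ → Fin 3 → ℝ} {g' : Fin 3 → ℝ} {x : ℝ}
    (a : Fin 3 → ℝ) (hg : HasDerivAt g g' x) : HasDerivAt (fun y => a ⨯₃ g y) (a ⨯₃ g') x :=
  (LinearMap.toContinuousLinearMap (crossProduct a)).hasFDerivAt.comp_hasDerivAt x hg

namespace intervalIntegral

theorem hasDerivAt_integral_of_continuous {E : Type*} [NormedAddCommGroup E] [NormedSpace ℝ E]
    {F F' : ℝ → ℝ → E} {a b : ℝ} (hF : Continuous (Function.uncurry F))
    (hF' : Continuous (Function.uncurry F')) (hderiv : ∀ s x, HasDerivAt (F · x) (F' s x) s)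
    (t : ℝ) : HasDerivAt (fun s => ∫ x in a..b, F s x) (∫ x in a..b, F' t x) t := by
  have hslice : ∀ {G : ℝ → ℝ → E}, Continuous (Function.uncurry G) → ∀ s, Continuous (G s) :=
    fun hG s => hG.comp (Continuous.prodMk_right s)
  obtain ⟨C, hC⟩ := ((isCompact_closedBall t 1).prod isCompact_uIcc).exists_bound_of_continuousOn
    hF'.continuousOn
  refine (hasDerivAt_integral_of_dominated_loc_of_deriv_le (bound := fun _ => C)
    (Metric.closedBall_mem_nhds t one_pos)
    (.of_forall fun s => (hslice hF s).aestronglyMeasurable) ((hslice hF t).intervalIntegrable a b)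
    (hslice hF' t).aestronglyMeasurable ?_ intervalIntegrable_const
    (.of_forall fun x _ s _ => hderiv s x)).2
  exact .of_forall fun x hx s hs => hC (s, x) ⟨hs, uIoc_subset_uIcc hx⟩

theorem integral_dotProduct_deriv_eq_deriv_dotProduct {ι : Type*} [Fintype ι]
    {u v u' v' : ℝ → ι → ℝ} {a b : ℝ}
    (hu : ∀ x ∈ uIcc a b, HasDerivAt u (u' x) x) (hv : ∀ x ∈ uIcc a b, HasDerivAt v (v' x) x)
    (hu' : ContinuousOn u' (uIcc a b)) (hv' : ContinuousOn v' (uIcc a b)) :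
    ∫ x in a..b, u x ⬝ᵥ v' x = u b ⬝ᵥ v b - u a ⬝ᵥ v a - ∫ x in a..b, u' x ⬝ᵥ v x := by
  have huc : ContinuousOn u (uIcc a b) := fun x hx => (hu x hx).continuousAt.continuousWithinAt
  have hvc : ContinuousOn v (uIcc a b) := fun x hx => (hv x hx).continuousAt.continuousWithinAt
  have hdot : Continuous fun p : (ι → ℝ) × (ι → ℝ) => p.1 ⬝ᵥ p.2 :=
    continuous_fst.dotProduct continuous_snd
  have hu'v : IntervalIntegrable (fun x => u' x ⬝ᵥ v x) volume a b :=
    (hdot.comp_continuousOn (hu'.prodMk hvc)).intervalIntegrable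
  have huv' : IntervalIntegrable (fun x => u x ⬝ᵥ v' x) volume a b :=
    (hdot.comp_continuousOn (huc.prodMk hv')).intervalIntegrable
  rw [← integral_eq_sub_of_hasDerivAt (fun x hx => (hu x hx).dotProduct (hv x hx))
    (hu'v.add huv'), integral_add hu'v huv']
  ring

end intervalIntegral

theorem le_exp_neg_mul_of_hasDerivAt_le {V V' : ℝ → ℝ} {c : ℝ} (hV : ∀ t, HasDerivAt V (V' t) t)
    (hle : ∀ t, V' t ≤ -c * V t) {s t : ℝ} (hst : s ≤ t) :
    V t ≤ Real.exp (-c * (t - s)) * V s := by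
  have hW : ∀ u, HasDerivAt (fun u => Real.exp (c * u) * V u)
      (Real.exp (c * u) * (c * V u + V' u)) u := fun u => by
    have hexp : HasDerivAt (fun u => Real.exp (c * u)) (Real.exp (c * u) * c) u := by
      simpa using ((hasDerivAt_id u).const_mul c).exp
    exact (hexp.fun_mul (hV u)).congr_deriv (by ring)
  have hanti : Antitone fun u => Real.exp (c * u) * V u :=
    antitone_of_deriv_nonpos (fun u => (hW u).differentiableAt) fun u => by
      rw [(hW u).deriv]
      exact mul_nonpos_of_nonneg_of_nonpos (Real.exp_pos _).le (by linarith [hle u])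
  have key : Real.exp (c * t) * V t ≤ Real.exp (c * s) * V s := hanti hst
  have hsplit : Real.exp (c * s) = Real.exp (c * t) * Real.exp (-c * (t - s)) := by
    rw [← Real.exp_add]; congr 1; ring
  rw [hsplit, mul_assoc] at key
  exact le_of_mul_le_mul_left key (Real.exp_pos _)

theorem hasDerivAt_integral_dotProduct_self {ι : Type*} [Fintype ι] {u u' : ℝ → ℝ → ι → ℝ}
    {a b : ℝ} (hu : Continuous (Function.uncurry u)) (hu' : Continuous (Function.uncurry u'))
    (hderiv : ∀ s x, HasDerivAt (u · x) (u' s x) s) (t : ℝ) :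
    HasDerivAt (fun s => ∫ x in a..b, u s x ⬝ᵥ u s x) (2 * ∫ x in a..b, u t x ⬝ᵥ u' t x) t := by
  rw [← intervalIntegral.integral_const_mul]
  refine intervalIntegral.hasDerivAt_integral_of_continuous (F := fun s x => u s x ⬝ᵥ u s x)
    (F' := fun s x => 2 * (u s x ⬝ᵥ u' s x)) (hu.dotProduct hu)
    (continuous_const.fun_mul (hu.dotProduct hu')) (fun s x => ?_) t
  exact ((hderiv s x).dotProduct (hderiv s x)).congr_deriv (by rw [dotProduct_comm]; ring)

theorem integral_dotProduct_of_neumann {L ν k : ℝ} {a : Fin 3 → ℝ} {u u' u'' v : ℝ → Fin 3 → ℝ}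
    (hu : ∀ x, HasDerivAt u (u' x) x) (hu' : ∀ x, HasDerivAt u' (u'' x) x)
    (hu'' : Continuous u'') (hv : ∀ x, v x = ν • u'' x + a ⨯₃ u'' x - k • u x)
    (h0 : u' 0 = 0) (hL : u' L = 0) :
    ∫ x in 0..L, u x ⬝ᵥ v x =
      -(ν * ∫ x in 0..L, u' x ⬝ᵥ u' x) - k * ∫ x in 0..L, u x ⬝ᵥ u x := by
  have huc : Continuous u := continuous_iff_continuousAt.2 fun x => (hu x).continuousAt
  have hu'c : Continuous u' := continuous_iff_continuousAt.2 fun x => (hu' x).continuousAt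
  have hflux : ∀ x, HasDerivAt (fun y => ν • u' y + a ⨯₃ u' y) (ν • u'' x + a ⨯₃ u'' x) x :=
    fun x => ((hu' x).const_smul ν).add ((hu' x).const_crossProduct a)
  have hflux_c : Continuous fun x => ν • u'' x + a ⨯₃ u'' x :=
    (hu''.const_smul ν).add (hu''.const_crossProduct a)
  have hibp := intervalIntegral.integral_dotProduct_deriv_eq_deriv_dotProduct (a := 0) (b := L)
    (fun x _ => hu x) (fun x _ => hflux x) hu'c.continuousOn hflux_c.continuousOn
  have hsplit : ∀ x, u x ⬝ᵥ v x = u x ⬝ᵥ (ν • u'' x + a ⨯₃ u'' x) - k * (u x ⬝ᵥ u x) := fun x => by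
    rw [hv, dotProduct_sub, dotProduct_smul, smul_eq_mul]
  have hint₁ : IntervalIntegrable (fun x => u x ⬝ᵥ (ν • u'' x + a ⨯₃ u'' x)) volume 0 L :=
    (huc.dotProduct hflux_c).intervalIntegrable _ _
  have hint₂ : IntervalIntegrable (fun x => k * (u x ⬝ᵥ u x)) volume 0 L :=
    (continuous_const.mul (huc.dotProduct huc)).intervalIntegrable _ _
  simp_rw [hsplit]
  rw [intervalIntegral.integral_sub hint₁ hint₂, intervalIntegral.integral_const_mul, hibp]
  simp only [h0, hL, smul_zero, map_zero, add_zero, dotProduct_zero, sub_zero, zero_sub,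
    dotProduct_add, dotProduct_smul, dot_cross_self, smul_eq_mul,
    intervalIntegral.integral_const_mul]

theorem stmt10_general (L ν k : ℝ) (hL : 0 < L) (hν : 0 ≤ ν)
    (a r : Fin 3 → ℝ) (z zt zx zxx : ℝ → ℝ → Fin 3 → ℝ)
    (hzt : ∀ t x, HasDerivAt (fun s => z s x) (zt t x) t)
    (hzx : ∀ t x, HasDerivAt (fun y => z t y) (zx t x) x)
    (hzxx : ∀ t x, HasDerivAt (fun y => zx t y) (zxx t x) x)
    (hcont : Continuous fun p : ℝ × ℝ => (z p.1 p.2, zt p.1 p.2, zx p.1 p.2, zxx p.1 p.2))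
    (hpde : ∀ t x, zt t x = ν • zxx t x + a ⨯₃ zxx t x + k • (r - z t x))
    (hbc : ∀ t, zx t 0 = 0 ∧ zx t L = 0) :
    (∀ t : ℝ,
      HasDerivAt (fun s => (1 / 2) * ∫ x in (0:ℝ)..L, (z s x - r) ⬝ᵥ (z s x - r))
        (-(ν * ∫ x in (0:ℝ)..L, zx t x ⬝ᵥ zx t x) -
          k * ∫ x in (0:ℝ)..L, (z t x - r) ⬝ᵥ (z t x - r)) t ∧
      -(ν * ∫ x in (0:ℝ)..L, zx t x ⬝ᵥ zx t x) -
          k * ∫ x in (0:ℝ)..L, (z t x - r) ⬝ᵥ (z t x - r) ≤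
        -2 * k * ((1 / 2) * ∫ x in (0:ℝ)..L, (z t x - r) ⬝ᵥ (z t x - r))) ∧
    (∀ t : ℝ, 0 ≤ t →
      (∫ x in (0:ℝ)..L, (z t x - r) ⬝ᵥ (z t x - r)) ≤
        Real.exp (-2 * k * t) * ∫ x in (0:ℝ)..L, (z 0 x - r) ⬝ᵥ (z 0 x - r)) := by
  set N : ℝ → ℝ := fun s => ∫ x in (0:ℝ)..L, (z s x - r) ⬝ᵥ (z s x - r)
  set E : ℝ → ℝ := fun s => ν * ∫ x in (0:ℝ)..L, zx s x ⬝ᵥ zx s x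
  have hN : ∀ t, HasDerivAt N (2 * (-E t - k * N t)) t := fun t => by
    have hflow : ∀ x, zt t x = ν • zxx t x + a ⨯₃ zxx t x - k • (z t x - r) := fun x => by
      rw [hpde]; module
    rw [← integral_dotProduct_of_neumann (fun x => (hzx t x).sub_const r) (hzxx t)
      (hcont.snd.snd.snd.comp (Continuous.prodMk_right t)) hflow (hbc t).1 (hbc t).2]
    exact hasDerivAt_integral_dotProduct_self (hcont.fst.sub continuous_const) hcont.snd.fst
      (fun s x => (hzt s x).sub_const r) t
  have hE : ∀ t, 0 ≤ E t := fun t => mul_nonneg hν <| intervalIntegral.integral_nonneg hL.le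
    fun x _ => by simpa using dotProduct_star_self_nonneg (zx t x)
  refine ⟨fun t => ⟨((hN t).const_mul (1 / 2)).congr_deriv (by ring), by linarith [hE t]⟩,
    fun t ht => ?_⟩
  have hdecay := le_exp_neg_mul_of_hasDerivAt_le hN (c := 2 * k) (fun t => by linarith [hE t]) ht
  convert hdecay using 3
  ring

/-- Theorem 9 of the paper: for a smooth solution `z` of the linearized controlled
Landau–Lifshitz equation `z_t = ν z_xx + a × z_xx + k(r - z)` with Neumann boundary
conditions, the Lyapunov function `V(t) = ½‖z(·,t) - r‖²_{L²}` satisfies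
`V'(t) = -ν‖z_x‖² - k‖z - r‖² ≤ -2kV(t)`, hence
`‖z(·,t) - r‖² ≤ e^{-2kt}‖z(·,0) - r‖²`. -/
theorem stmt10 (L ν k : ℝ) (hL : 0 < L) (hν : 0 ≤ ν) (hk : 0 < k)
    (a r : Fin 3 → ℝ) (z zt zx zxx : ℝ → ℝ → Fin 3 → ℝ)
    (hzt : ∀ t x, HasDerivAt (fun s => z s x) (zt t x) t)
    (hzx : ∀ t x, HasDerivAt (fun y => z t y) (zx t x) x)
    (hzxx : ∀ t x, HasDerivAt (fun y => zx t y) (zxx t x) x)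
    (hcont : Continuous fun p : ℝ × ℝ => (z p.1 p.2, zt p.1 p.2, zx p.1 p.2, zxx p.1 p.2))
    (hpde : ∀ t x, zt t x = ν • zxx t x + a ⨯₃ zxx t x + k • (r - z t x))
    (hbc : ∀ t, zx t 0 = 0 ∧ zx t L = 0) :
    (∀ t : ℝ,
      HasDerivAt (fun s => (1 / 2) * ∫ x in (0:ℝ)..L, (z s x - r) ⬝ᵥ (z s x - r))
        (-(ν * ∫ x in (0:ℝ)..L, zx t x ⬝ᵥ zx t x) -
          k * ∫ x in (0:ℝ)..L, (z t x - r) ⬝ᵥ (z t x - r)) t ∧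
      -(ν * ∫ x in (0:ℝ)..L, zx t x ⬝ᵥ zx t x) -
          k * ∫ x in (0:ℝ)..L, (z t x - r) ⬝ᵥ (z t x - r) ≤
        -2 * k * ((1 / 2) * ∫ x in (0:ℝ)..L, (z t x - r) ⬝ᵥ (z t x - r))) ∧
    (∀ t : ℝ, 0 ≤ t →
      (∫ x in (0:ℝ)..L, (z t x - r) ⬝ᵥ (z t x - r)) ≤
        Real.exp (-2 * k * t) * ∫ x in (0:ℝ)..L, (z 0 x - r) ⬝ᵥ (z 0 x - r)) :=
  stmt10_general L ν k hL hν a r z zt zx zxx hzt hzx hzxx hcont hpde hbc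
end
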